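/- For the graphs S_t := S(t, {0,…,t−1}) (a t-cycle with a triangle attached along every edge), both real sequences t ↦ c_o(S_t)/c_e(S_t) and t ↦ c_e(S_t)/c_o(S_t) (t ≥ 3) converge to 1 as t → ∞. -/

import Mathlib

open SimpleGraph Filter

/-- A subgraph is a cycle: nonempty vertex set, connected, and every vertex of the
subgraph has degree exactly 2 in the subgraph. -/
def SimpleGraph.Subgraph.IsCycleSub {V : Type*} {G : SimpleGraph V} (H : G.Subgraph) : Prop :=
  H.verts.Nonempty ∧ H.coe.Connected ∧ ∀ v ∈ H.verts, (H.neighborSet v).ncard = 2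

/-- The number of odd cycles of `G`. -/
noncomputable def cOdd {V : Type*} (G : SimpleGraph V) : ℕ :=
  {H : G.Subgraph | H.IsCycleSub ∧ Odd H.verts.ncard}.ncard

/-- The number of even cycles of `G`. -/
noncomputable def cEven {V : Type*} (G : SimpleGraph V) : ℕ :=
  {H : G.Subgraph | H.IsCycleSub ∧ Even H.verts.ncard}.ncard

/-- The number of odd cycles of `G` passing through the edge `xy`. -/
noncomputable def cOddE {V : Type*} (G : SimpleGraph V) (x y : V) : ℕ :=
  {H : G.Subgraph | H.IsCycleSub ∧ Odd H.verts.ncard ∧ H.Adj x y}.ncard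

/-- The number of even cycles of `G` passing through the edge `xy`. -/
noncomputable def cEvenE {V : Type*} (G : SimpleGraph V) (x y : V) : ℕ :=
  {H : G.Subgraph | H.IsCycleSub ∧ Even H.verts.ncard ∧ H.Adj x y}.ncard

/-- The graph `S(t, I)`: a `t`-cycle `v_0 … v_(t-1)` together with, for each `i ∈ I`,
an extra vertex `r_i` joined to `v_i` and `v_(i+1)` (a triangle attached along the
edge `v_i v_(i+1)`). -/
def SGraph (t : ℕ) (I : Finset (ZMod t)) : SimpleGraph (ZMod t ⊕ {i : ZMod t // i ∈ I}) :=
  SimpleGraph.fromRel (fun x y =>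
    (∃ i : ZMod t, x = Sum.inl i ∧ y = Sum.inl (i + 1)) ∨
    (∃ r : {i : ZMod t // i ∈ I}, y = Sum.inr r ∧
      (x = Sum.inl r.val ∨ x = Sum.inl (r.val + 1))))

/-!
Every cycle of `S_t` is either one of the `t` triangles `v_i r_i v_(i+1)`, or uses, at each
index `i`, at most one of the edge `v_i v_(i+1)` and the apex `r_i`. On the non-triangle cycles,
switching between the two forms at a used index is a parity-reversing involution, provided the
index is chosen as a function of the set of used indices, which switching does not change.
Hence `c_o(S_t) = c_e(S_t) + t`. Detouring the base `t`-cycle through `t - 2` of the apexes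
gives `C(t, 2)` distinct even cycles, so `t / c_e(S_t) → 0` and both ratios tend to `1`.
-/

namespace SimpleGraph.Subgraph

variable {V : Type*} {G : SimpleGraph V} {H : G.Subgraph}

theorem reflTransGen_adj_iff_reachable {x y : V} (hx : x ∈ H.verts) (hy : y ∈ H.verts) :
    Relation.ReflTransGen H.Adj x y ↔ H.coe.Reachable ⟨x, hx⟩ ⟨y, hy⟩ := by
  rw [reachable_iff_reflTransGen]
  constructor
  · intro h
    induction h with
    | refl => rfl
    | tail _ hzy ih => exact (ih (H.edge_vert hzy)).tail hzy
  · intro h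
    exact h.lift Subtype.val fun _ _ h => h

theorem coe_connected_of_reflTransGen {c : V} (hc : c ∈ H.verts)
    (h : ∀ x ∈ H.verts, Relation.ReflTransGen H.Adj c x) : H.coe.Connected :=
  (connected_iff_exists_forall_reachable _).mpr
    ⟨⟨c, hc⟩, fun x => (reflTransGen_adj_iff_reachable hc x.2).mp (h x x.2)⟩

theorem reflTransGen_adj_of_connected (hH : H.coe.Connected) {x y : V} (hx : x ∈ H.verts)
    (hy : y ∈ H.verts) : Relation.ReflTransGen H.Adj x y :=
  (reflTransGen_adj_iff_reachable hx hy).mpr (hH.preconnected _ _)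

theorem verts_subset_of_adj_closed (hH : H.coe.Connected) {S : Set V} {c : V} (hcS : c ∈ S)
    (hc : c ∈ H.verts) (hS : ∀ x ∈ S, ∀ y, H.Adj x y → y ∈ S) : H.verts ⊆ S := by
  intro x hx
  induction reflTransGen_adj_of_connected hH hc hx with
  | refl => exact hcS
  | tail _ hyz ih => exact hS _ (ih (H.edge_vert hyz)) _ hyz

theorem neighborSet_eq_pair {x a b : V} (hx : (H.neighborSet x).ncard = 2) (hab : a ≠ b)
    (ha : H.Adj x a) (hb : H.Adj x b) : H.neighborSet x = {a, b} := by
  refine (Set.eq_of_subset_of_ncard_le ?_ ?_ ?_).symm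
  · rintro y (rfl | rfl) <;> assumption
  · rw [hx, Set.ncard_pair hab]
  · exact Set.finite_of_ncard_ne_zero (by rw [hx]; omega)

theorem neighborSet_eq_of_subset_pair {x a b : V} (hx : (H.neighborSet x).ncard = 2)
    (hsub : H.neighborSet x ⊆ {a, b}) : H.neighborSet x = {a, b} :=
  Set.eq_of_subset_of_ncard_le hsub (by grw [Set.ncard_insert_le, Set.ncard_singleton, hx])
    (Set.toFinite _)

section Surgery

variable {a b r : V}

def detour (H : G.Subgraph) (har : G.Adj a r) (hrb : G.Adj r b) : G.Subgraph :=
  H.deleteEdges {s(a, b)} ⊔ G.subgraphOfAdj har ⊔ G.subgraphOfAdj hrb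

def shortcut (H : G.Subgraph) (r : V) (hab : G.Adj a b) : G.Subgraph :=
  H.deleteVerts {r} ⊔ G.subgraphOfAdj hab

section
variable (har : G.Adj a r) (hrb : G.Adj r b)

theorem detour_adj {x y : V} : (H.detour har hrb).Adj x y ↔
    H.Adj x y ∧ s(x, y) ≠ s(a, b) ∨ s(a, r) = s(x, y) ∨ s(r, b) = s(x, y) := by
  simp [detour, deleteEdges_adj, subgraphOfAdj_adj, or_assoc]

theorem detour_comm : H.detour har hrb = H.detour hrb.symm har.symm := by
  rw [detour, detour, Sym2.eq_swap, subgraphOfAdj_symm har, subgraphOfAdj_symm hrb,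
    sup_right_comm]

theorem verts_detour (hab : H.Adj a b) : (H.detour har hrb).verts = insert r H.verts := by
  ext x
  simp only [detour, verts_sup, deleteEdges_verts, subgraphOfAdj_verts]
  grind [hab.fst_mem, hab.snd_mem]

end

section
variable {har : G.Adj a r} {hrb : G.Adj r b}

theorem neighborSet_detour_self (hr : r ∉ H.verts) :
    (H.detour har hrb).neighborSet r = {a, b} := by
  ext y
  have : ¬ H.Adj r y := fun h => hr h.fst_mem
  simp only [mem_neighborSet, detour_adj, this, Sym2.eq_iff]
  grind [har.ne, hrb.ne]

theorem neighborSet_detour_left (hab : G.Adj a b) :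
    (H.detour har hrb).neighborSet a = insert r (H.neighborSet a \ {b}) := by
  ext y
  simp only [mem_neighborSet, Set.mem_insert_iff, Set.mem_sdiff, Set.mem_singleton_iff,
    detour_adj, Sym2.eq_iff]
  grind [har.ne, hab.ne]

theorem neighborSet_detour_of_ne {x : V} (hxa : x ≠ a) (hxb : x ≠ b) (hxr : x ≠ r) :
    (H.detour har hrb).neighborSet x = H.neighborSet x := by
  ext y
  simp only [detour_adj, Sym2.eq_iff, mem_neighborSet]
  grind

theorem ncard_neighborSet_detour_left (ha : (H.neighborSet a).ncard = 2) (hab : H.Adj a b)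
    (hr : r ∉ H.verts) : ((H.detour har hrb).neighborSet a).ncard = 2 := by
  have hfin : (H.neighborSet a).Finite := Set.finite_of_ncard_ne_zero (by omega)
  rw [neighborSet_detour_left (H.adj_sub hab),
    Set.ncard_insert_of_notMem (fun h => hr h.1.snd_mem) hfin.sdiff,
    Set.ncard_sdiff_singleton_of_mem (s := H.neighborSet a) hab, ha]

theorem connected_detour (hH : H.coe.Connected) (hab : H.Adj a b) :
    (H.detour har hrb).coe.Connected := by
  have hverts := verts_detour har hrb hab
  have har' : (H.detour har hrb).Adj a r := (detour_adj har hrb).mpr (by simp)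
  have hrb' : (H.detour har hrb).Adj r b := (detour_adj har hrb).mpr (by simp)
  have hlift : ∀ x y, H.Adj x y → Relation.ReflTransGen (H.detour har hrb).Adj x y := by
    intro x y hxy
    by_cases hxy' : s(x, y) = s(a, b)
    · rcases Sym2.eq_iff.mp hxy' with ⟨rfl, rfl⟩ | ⟨rfl, rfl⟩
      · exact .head har' (.single hrb')
      · exact .head hrb'.symm (.single har'.symm)
    · exact .single ((detour_adj har hrb).mpr (.inl ⟨hxy, hxy'⟩))
  refine coe_connected_of_reflTransGen (c := a) (by simp [hverts, hab.fst_mem]) fun x hx => ?_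
  rcases (by simpa [hverts] using hx : x = r ∨ x ∈ H.verts) with rfl | hx
  · exact .single har'
  · exact (reflTransGen_adj_of_connected hH hab.fst_mem hx).lift' id hlift

theorem IsCycleSub.detour (hc : H.IsCycleSub) (hab : H.Adj a b) (hr : r ∉ H.verts) :
    (H.detour har hrb).IsCycleSub := by
  have hverts := verts_detour har hrb hab
  refine ⟨⟨r, by simp [hverts]⟩, connected_detour hc.2.1 hab, fun x hx => ?_⟩
  by_cases hxr : x = r
  · subst hxr
    rw [neighborSet_detour_self hr, Set.ncard_pair (H.adj_sub hab).ne]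
  by_cases hxa : x = a
  · subst hxa
    exact ncard_neighborSet_detour_left (hc.2.2 _ hab.fst_mem) hab hr
  by_cases hxb : x = b
  · subst hxb
    rw [detour_comm]
    exact ncard_neighborSet_detour_left (hc.2.2 _ hab.snd_mem) hab.symm hr
  rw [neighborSet_detour_of_ne hxa hxb hxr]
  exact hc.2.2 x (by simpa [hverts, hxr] using hx)

end

section
variable {hab : G.Adj a b}

theorem shortcut_adj {x y : V} :
    (H.shortcut r hab).Adj x y ↔ H.Adj x y ∧ x ≠ r ∧ y ≠ r ∨ s(a, b) = s(x, y) := by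
  simp only [shortcut, sup_adj, deleteVerts_adj, subgraphOfAdj_adj, Set.mem_singleton_iff]
  grind [H.edge_vert, H.adj_symm]

theorem shortcut_comm : H.shortcut r hab = H.shortcut r hab.symm := by
  rw [shortcut, shortcut, subgraphOfAdj_symm]

theorem verts_shortcut (hra : H.Adj r a) (hrb : H.Adj r b) :
    (H.shortcut r hab).verts = H.verts \ {r} := by
  ext x
  simp only [shortcut, verts_sup, deleteVerts_verts, subgraphOfAdj_verts]
  grind [hra.snd_mem, hrb.snd_mem, hra.ne, hrb.ne]

theorem IsCycleSub.neighborSet_eq_of_subset (hc : H.IsCycleSub) {x : V} (hx : x ∈ H.verts)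
    (hN : G.neighborSet x ⊆ {a, b}) : H.neighborSet x = {a, b} :=
  neighborSet_eq_of_subset_pair (hc.2.2 x hx) fun _ hy => hN (H.adj_sub hy)

theorem neighborSet_shortcut_left (har : a ≠ r) :
    (H.shortcut r hab).neighborSet a = insert b (H.neighborSet a \ {r}) := by
  ext y
  simp only [mem_neighborSet, Set.mem_insert_iff, Set.mem_sdiff, Set.mem_singleton_iff,
    shortcut_adj, Sym2.eq_iff]
  grind [hab.ne]

theorem neighborSet_shortcut_of_ne {x : V} (hxa : x ≠ a) (hxb : x ≠ b) (hxr : x ≠ r) :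
    (H.shortcut r hab).neighborSet x = H.neighborSet x \ {r} := by
  ext y
  simp only [mem_neighborSet, Set.mem_sdiff, Set.mem_singleton_iff, shortcut_adj, Sym2.eq_iff]
  grind [H.edge_vert]

theorem ncard_neighborSet_shortcut_left (ha : (H.neighborSet a).ncard = 2) (har : H.Adj a r)
    (hab' : ¬ H.Adj a b) : ((H.shortcut r hab).neighborSet a).ncard = 2 := by
  have hfin : (H.neighborSet a).Finite := Set.finite_of_ncard_ne_zero (by omega)
  rw [neighborSet_shortcut_left har.ne, Set.ncard_insert_of_notMem (fun h => hab' h.1) hfin.sdiff,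
    Set.ncard_sdiff_singleton_of_mem (s := H.neighborSet a) har, ha]

theorem connected_shortcut (hH : H.coe.Connected) (hr : H.neighborSet r = {a, b}) :
    (H.shortcut r hab).coe.Connected := by
  have hrN : ∀ y, H.Adj r y ↔ y = a ∨ y = b := fun y => by simp [← mem_neighborSet, hr]
  have hra : H.Adj r a := (hrN a).mpr (.inl rfl)
  have hrb : H.Adj r b := (hrN b).mpr (.inr rfl)
  have hab' : (H.shortcut r hab).Adj a b := shortcut_adj.mpr (.inr rfl)
  classical
  let f : V → V := fun x => if x = r then a else x
  have hfr : f r = a := if_pos rfl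
  have hf : ∀ x, x ≠ r → f x = x := fun x hx => if_neg hx
  have hend : ∀ y, H.Adj r y → Relation.ReflTransGen (H.shortcut r hab).Adj a (f y) ∧
      Relation.ReflTransGen (H.shortcut r hab).Adj (f y) a := by
    intro y hy
    rcases (hrN y).mp hy with h | h <;> rw [h]
    · rw [hf a hra.ne.symm]
      exact ⟨.refl, .refl⟩
    · rw [hf b hrb.ne.symm]
      exact ⟨.single hab', .single hab'.symm⟩
  have hlift : ∀ x y, H.Adj x y → Relation.ReflTransGen (H.shortcut r hab).Adj (f x) (f y) := by
    intro x y hxy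
    by_cases hx : x = r
    · rw [hx, hfr]
      exact (hend y (hx ▸ hxy)).1
    by_cases hy : y = r
    · rw [hy, hfr]
      exact (hend x (hy ▸ hxy.symm)).2
    rw [hf x hx, hf y hy]
    exact .single (shortcut_adj.mpr (.inl ⟨hxy, hx, hy⟩))
  have hverts := verts_shortcut (hab := hab) hra hrb
  refine coe_connected_of_reflTransGen (c := a) (by simp [hverts, hra.snd_mem, hra.ne.symm])
    fun x hx => ?_
  rw [hverts] at hx
  have : Relation.ReflTransGen _ (f a) (f x) :=
    (reflTransGen_adj_of_connected hH hra.snd_mem hx.1).lift' f hlift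
  rwa [hf a hra.ne.symm, hf x hx.2] at this

theorem IsCycleSub.shortcut (hc : H.IsCycleSub) (hr : H.neighborSet r = {a, b})
    (hab' : ¬ H.Adj a b) : (H.shortcut r hab).IsCycleSub := by
  have hrN : ∀ y, H.Adj r y ↔ y = a ∨ y = b := fun y => by simp [← mem_neighborSet, hr]
  have hra : H.Adj r a := (hrN a).mpr (.inl rfl)
  have hrb : H.Adj r b := (hrN b).mpr (.inr rfl)
  have hverts := verts_shortcut (hab := hab) hra hrb
  refine ⟨⟨a, by simp [hverts, hra.snd_mem, hra.ne.symm]⟩, connected_shortcut hc.2.1 hr,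
    fun x hx => ?_⟩
  rw [hverts] at hx
  by_cases hxa : x = a
  · subst hxa
    exact ncard_neighborSet_shortcut_left (hc.2.2 _ hx.1) hra.symm hab'
  by_cases hxb : x = b
  · subst hxb
    rw [shortcut_comm]
    exact ncard_neighborSet_shortcut_left (hc.2.2 _ hx.1) hrb.symm fun h => hab' h.symm
  have hxr : r ∉ H.neighborSet x := fun h => ((hrN x).mp (H.adj_symm h)).elim hxa hxb
  rw [neighborSet_shortcut_of_ne hxa hxb hx.2, Set.sdiff_singleton_eq_self hxr]
  exact hc.2.2 x hx.1

end

theorem shortcut_detour (hab : H.Adj a b) (hr : r ∉ H.verts) (har : G.Adj a r) (hrb : G.Adj r b) :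
    (H.detour har hrb).shortcut r (H.adj_sub hab) = H := by
  ext x y
  · rw [verts_shortcut ((detour_adj har hrb).mpr (by simp)) ((detour_adj har hrb).mpr (by simp)),
      verts_detour har hrb hab, Set.insert_sdiff_self_of_notMem hr]
  · simp only [shortcut_adj, detour_adj, Sym2.eq_iff]
    grind [H.edge_vert, H.adj_symm]

theorem detour_shortcut (hr : H.neighborSet r = {a, b}) (hab' : ¬ H.Adj a b) (hab : G.Adj a b)
    (har : G.Adj a r) (hrb : G.Adj r b) : (H.shortcut r hab).detour har hrb = H := by
  have hrN : ∀ y, H.Adj r y ↔ y = a ∨ y = b := fun y => by simp [← mem_neighborSet, hr]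
  have hra : H.Adj r a := (hrN a).mpr (.inl rfl)
  ext x y
  · rw [verts_detour har hrb (shortcut_adj.mpr (.inr rfl)),
      verts_shortcut hra ((hrN b).mpr (.inr rfl)), Set.insert_sdiff_singleton,
      Set.insert_eq_of_mem hra.fst_mem]
  · simp only [shortcut_adj, detour_adj, Sym2.eq_iff]
    grind [H.adj_symm]

end Surgery

section Triangle

variable {a b c : V}

theorem IsCycleSub.eq_induce_of_adj (hc : H.IsCycleSub) (hab : H.Adj a b) (hbc : H.Adj b c)
    (hca : H.Adj c a) : H = (⊤ : G.Subgraph).induce {a, b, c} := by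
  have hna := neighborSet_eq_pair (hc.2.2 a hab.fst_mem) (H.adj_sub hbc).ne hab hca.symm
  have hnb := neighborSet_eq_pair (hc.2.2 b hbc.fst_mem) (H.adj_sub hca).ne hbc hab.symm
  have hnc := neighborSet_eq_pair (hc.2.2 c hca.fst_mem) (H.adj_sub hab).ne hca hbc.symm
  have hverts : H.verts = {a, b, c} := by
    refine (verts_subset_of_adj_closed hc.2.1 (c := a) (by simp) hab.fst_mem ?_).antisymm ?_
    · rintro x (rfl | rfl | rfl) y hy
      · rw [← mem_neighborSet, hna] at hy; grind
      · rw [← mem_neighborSet, hnb] at hy; grind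
      · rw [← mem_neighborSet, hnc] at hy; grind
    · simp [Set.insert_subset_iff, hab.fst_mem, hbc.fst_mem, hca.fst_mem]
  ext x y
  · rw [hverts, induce_verts]
  · simp only [induce_adj, top_adj, Set.mem_insert_iff, Set.mem_singleton_iff]
    constructor
    · intro h
      have hx := hverts ▸ h.fst_mem
      have hy := hverts ▸ h.snd_mem
      exact ⟨hx, hy, H.adj_sub h⟩
    · rintro ⟨hx | hx | hx, hy | hy | hy, h⟩ <;> subst hx hy <;>
        first | exact absurd rfl h.ne | assumption | exact H.adj_symm ‹_›

theorem isCycleSub_induce_of_adj (hab : G.Adj a b) (hbc : G.Adj b c) (hca : G.Adj c a) :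
    ((⊤ : G.Subgraph).induce {a, b, c}).IsCycleSub := by
  have hN : ∀ x ∈ ({a, b, c} : Set V), ((⊤ : G.Subgraph).induce {a, b, c}).neighborSet x =
      {a, b, c} \ {x} := by
    intro x hx
    ext y
    simp only [mem_neighborSet, induce_adj, top_adj, Set.mem_sdiff, Set.mem_insert_iff,
      Set.mem_singleton_iff] at hx ⊢
    grind [SimpleGraph.irrefl, G.adj_symm]
  have h3 : ({a, b, c} : Set V).ncard = 3 :=
    Set.ncard_eq_three.mpr ⟨a, b, c, hab.ne, hca.ne.symm, hbc.ne, rfl⟩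
  refine ⟨⟨a, by simp⟩, coe_connected_of_reflTransGen (c := a) (by simp) ?_, fun x hx => ?_⟩
  · rintro x (rfl | rfl | rfl)
    · exact .refl
    · exact .single (by simpa using hab)
    · exact .single (by simpa using hca.symm)
  · rw [hN x hx, Set.ncard_sdiff_singleton_of_mem (s := {a, b, c}) hx, h3]

end Triangle

end SimpleGraph.Subgraph

namespace SGraph

open SimpleGraph.Subgraph

variable {t : ℕ} [Fact (2 < t)]

instance : NeZero t := ⟨by have : 2 < t := Fact.out; omega⟩

abbrev Vert (t : ℕ) [NeZero t] := ZMod t ⊕ {i : ZMod t // i ∈ (Finset.univ : Finset (ZMod t))}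

abbrev S (t : ℕ) [NeZero t] : SimpleGraph (Vert t) := SGraph t Finset.univ

def v (i : ZMod t) : Vert t := Sum.inl i

def r (i : ZMod t) : Vert t := Sum.inr ⟨i, Finset.mem_univ i⟩

theorem vert_cases (x : Vert t) : (∃ i, x = v i) ∨ ∃ i, x = r i := by
  rcases x with i | ⟨i, -⟩
  exacts [.inl ⟨i, rfl⟩, .inr ⟨i, rfl⟩]

@[simp] theorem v_inj {i j : ZMod t} : v i = v j ↔ i = j := Sum.inl_injective.eq_iff

@[simp] theorem r_inj {i j : ZMod t} : r i = r j ↔ i = j := by simp [r]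

@[simp] theorem v_ne_r (i j : ZMod t) : v i ≠ r j := Sum.inl_ne_inr

@[simp] theorem r_ne_v (i j : ZMod t) : r i ≠ v j := Sum.inr_ne_inl

theorem add_one_ne_self (i : ZMod t) : i + 1 ≠ i := by
  have : Fact (1 < t) := ⟨by have : 2 < t := Fact.out; omega⟩
  simp

theorem add_two_ne_self (i : ZMod t) : i + 1 + 1 ≠ i := by
  have : 2 < t := Fact.out
  rw [add_assoc, Ne, add_eq_left, one_add_one_eq_two]
  exact_mod_cast (ZMod.natCast_eq_zero_iff 2 t).not.mpr fun h => by
    have := Nat.le_of_dvd two_pos h; omega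

theorem adj_v_v {a b : ZMod t} : (S t).Adj (v a) (v b) ↔ b = a + 1 ∨ a = b + 1 := by
  simp only [SGraph, v, fromRel_adj]
  grind [add_one_ne_self]

theorem adj_v_r {a b : ZMod t} : (S t).Adj (v a) (r b) ↔ a = b ∨ a = b + 1 := by
  simp [SGraph, r, v]

theorem not_adj_r_r (a b : ZMod t) : ¬ (S t).Adj (r a) (r b) := by
  simp [SGraph, r]

theorem adj_v_succ (k : ZMod t) : (S t).Adj (v k) (v (k + 1)) := adj_v_v.mpr (.inl rfl)

theorem adj_v_r_self (k : ZMod t) : (S t).Adj (v k) (r k) := adj_v_r.mpr (.inl rfl)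

theorem adj_r_v_succ (k : ZMod t) : (S t).Adj (r k) (v (k + 1)) := (adj_v_r.mpr (.inr rfl)).symm

theorem neighborSet_r (k : ZMod t) : (S t).neighborSet (r k) = {v k, v (k + 1)} := by
  ext x
  rcases vert_cases x with ⟨i, rfl⟩ | ⟨i, rfl⟩
  · simp [(S t).adj_comm (r k), adj_v_r, eq_comm]
  · simp [not_adj_r_r]

theorem sym2_v_succ_ne {j k : ZMod t} (hjk : j ≠ k) :
    s(v j, v (j + 1)) ≠ s(v k, v (k + 1)) := by
  simp only [ne_eq, Sym2.eq_iff, v_inj, hjk, false_and, false_or, not_and]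
  rintro rfl h
  exact add_two_ne_self k h

variable {H : (S t).Subgraph} {j k : ZMod t}

def UsesEdge (H : (S t).Subgraph) (k : ZMod t) : Prop := H.Adj (v k) (v (k + 1))

def UsesApex (H : (S t).Subgraph) (k : ZMod t) : Prop := r k ∈ H.verts

def triangle (k : ZMod t) : (S t).Subgraph := (⊤ : (S t).Subgraph).induce {v k, v (k + 1), r k}

open scoped Classical in
noncomputable def switch (k : ZMod t) (H : (S t).Subgraph) : (S t).Subgraph :=
  if UsesEdge H k then H.detour (adj_v_r_self k) (adj_r_v_succ k)
  else H.shortcut (r k) (adj_v_succ k)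

theorem switch_of_usesEdge (h : UsesEdge H k) :
    switch k H = H.detour (adj_v_r_self k) (adj_r_v_succ k) := if_pos h

theorem switch_of_not_usesEdge (h : ¬ UsesEdge H k) :
    switch k H = H.shortcut (r k) (adj_v_succ k) := if_neg h

theorem usesEdge_switch_self : UsesEdge (switch k H) k ↔ ¬ UsesEdge H k := by
  by_cases h : UsesEdge H k
  · simpa [UsesEdge, switch_of_usesEdge h, detour_adj] using h
  · simpa [UsesEdge, switch_of_not_usesEdge h, shortcut_adj] using h

theorem usesApex_switch_self : UsesApex (switch k H) k ↔ UsesEdge H k := by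
  by_cases h : UsesEdge H k
  · simp [UsesApex, switch_of_usesEdge h, detour, h]
  · simp [UsesApex, switch_of_not_usesEdge h, shortcut, h]

theorem usesEdge_switch_of_ne (hjk : j ≠ k) : UsesEdge (switch k H) j ↔ UsesEdge H j := by
  by_cases h : UsesEdge H k
  · simp [UsesEdge, switch_of_usesEdge h, detour_adj, sym2_v_succ_ne hjk]
  · simp [UsesEdge, switch_of_not_usesEdge h, shortcut_adj, (sym2_v_succ_ne hjk).symm]

theorem usesApex_switch_of_ne (hjk : j ≠ k) : UsesApex (switch k H) j ↔ UsesApex H j := by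
  by_cases h : UsesEdge H k
  · simp [UsesApex, switch_of_usesEdge h, detour, hjk]
  · simp [UsesApex, switch_of_not_usesEdge h, shortcut, hjk]

theorem neighborSet_r_of_usesApex (hc : H.IsCycleSub) (ha : UsesApex H k) :
    H.neighborSet (r k) = {v k, v (k + 1)} :=
  hc.neighborSet_eq_of_subset ha (neighborSet_r k).subset

theorem adj_r_of_usesApex (hc : H.IsCycleSub) (ha : UsesApex H k) :
    H.Adj (r k) (v k) ∧ H.Adj (r k) (v (k + 1)) := by
  simp [← Subgraph.mem_neighborSet, neighborSet_r_of_usesApex hc ha]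

theorem isCycleSub_switch (hc : H.IsCycleSub) (hk : UsesEdge H k ↔ ¬ UsesApex H k) :
    (switch k H).IsCycleSub := by
  by_cases h : UsesEdge H k
  · rw [switch_of_usesEdge h]
    exact hc.detour h (hk.mp h)
  · rw [switch_of_not_usesEdge h]
    exact hc.shortcut (neighborSet_r_of_usesApex hc (hk.not_left.mp h)) h

theorem switch_switch (hc : H.IsCycleSub) (hk : UsesEdge H k ↔ ¬ UsesApex H k) :
    switch k (switch k H) = H := by
  by_cases h : UsesEdge H k
  · have h' : ¬ UsesEdge (switch k H) k := fun h' => usesEdge_switch_self.mp h' h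
    rw [switch_of_not_usesEdge h', switch_of_usesEdge h]
    exact shortcut_detour h (hk.mp h) _ _
  · have h' : UsesEdge (switch k H) k := usesEdge_switch_self.mpr h
    rw [switch_of_usesEdge h', switch_of_not_usesEdge h]
    exact detour_shortcut (neighborSet_r_of_usesApex hc (hk.not_left.mp h)) h _ _ _

theorem even_ncard_switch (hc : H.IsCycleSub) (hk : UsesEdge H k ↔ ¬ UsesApex H k) :
    Even (switch k H).verts.ncard ↔ ¬ Even H.verts.ncard := by
  by_cases h : UsesEdge H k
  · rw [switch_of_usesEdge h, verts_detour _ _ h, Set.ncard_insert_of_notMem (hk.mp h),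
      Nat.even_add_one]
  · have ha : UsesApex H k := hk.not_left.mp h
    have hpos : 0 < H.verts.ncard := (Set.ncard_pos (Set.toFinite _)).mpr ⟨_, ha⟩
    rw [switch_of_not_usesEdge h, verts_shortcut (adj_r_of_usesApex hc ha).1
      (adj_r_of_usesApex hc ha).2, Set.ncard_sdiff_singleton_of_mem ha, Nat.even_sub' hpos]
    simp

def UsesGap (H : (S t).Subgraph) (k : ZMod t) : Prop := UsesEdge H k ∨ UsesApex H k

theorem usesGap_switch (hk : UsesGap H k) : UsesGap (switch k H) j ↔ UsesGap H j := by
  by_cases hjk : j = k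
  · subst hjk
    simp only [UsesGap, usesEdge_switch_self, usesApex_switch_self]
    exact iff_of_true (em _).symm hk
  · simp only [UsesGap, usesEdge_switch_of_ne hjk, usesApex_switch_of_ne hjk]

theorem exists_usesGap (hc : H.IsCycleSub) : ∃ k, UsesGap H k := by
  obtain ⟨x, hx⟩ := hc.1
  obtain ⟨y, hxy⟩ : (H.neighborSet x).Nonempty :=
    Set.nonempty_of_ncard_ne_zero (by rw [hc.2.2 x hx]; omega)
  rcases vert_cases x with ⟨a, rfl⟩ | ⟨i, rfl⟩
  · rcases vert_cases y with ⟨b, rfl⟩ | ⟨i, rfl⟩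
    · rcases adj_v_v.mp (H.adj_sub hxy) with rfl | rfl
      exacts [⟨a, .inl hxy⟩, ⟨b, .inl (H.adj_symm hxy)⟩]
    · exact ⟨i, .inr (H.edge_vert (H.adj_symm hxy))⟩
  · exact ⟨i, .inr hx⟩

noncomputable def gap (H : (S t).Subgraph) : ZMod t := Classical.epsilon (UsesGap H)

theorem usesGap_gap (hc : H.IsCycleSub) : UsesGap H (gap H) :=
  Classical.epsilon_spec (exists_usesGap hc)

noncomputable def partner (H : (S t).Subgraph) : (S t).Subgraph := switch (gap H) H

theorem gap_partner (hc : H.IsCycleSub) : gap (partner H) = gap H :=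
  congrArg Classical.epsilon (funext fun _ => propext (usesGap_switch (usesGap_gap hc)))

theorem isCycleSub_triangle (k : ZMod t) : (triangle k).IsCycleSub :=
  isCycleSub_induce_of_adj (adj_v_succ k) (adj_r_v_succ k).symm (adj_v_r_self k).symm

theorem ncard_verts_triangle (k : ZMod t) : (triangle k).verts.ncard = 3 :=
  Set.ncard_eq_three.mpr ⟨_, _, _, (adj_v_succ k).ne, by simp, by simp, rfl⟩

theorem triangle_injective : Function.Injective (triangle : ZMod t → (S t).Subgraph) := by
  intro j k h
  have : r j ∈ (triangle k).verts := h ▸ by simp [triangle]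
  simpa [triangle] using this

theorem eq_triangle_iff (hc : H.IsCycleSub) : H = triangle k ↔ UsesEdge H k ∧ UsesApex H k := by
  constructor
  · rintro rfl
    simp [triangle, UsesEdge, UsesApex, adj_v_succ]
  · rintro ⟨hE, hA⟩
    obtain ⟨h1, h2⟩ := adj_r_of_usesApex hc hA
    exact hc.eq_induce_of_adj hE (H.adj_symm h2) h1

section nontriangle
variable (hc : H.IsCycleSub) (hnt : ∀ k, H ≠ triangle k)
include hc hnt

theorem usesEdge_iff_not_usesApex (hk : UsesGap H k) : UsesEdge H k ↔ ¬ UsesApex H k := by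
  have := (eq_triangle_iff hc).not.mp (hnt k)
  unfold UsesGap at hk
  tauto

theorem switch_ne_triangle (hk : UsesGap H k) (j : ZMod t) : switch k H ≠ triangle j := by
  have hk' := usesEdge_iff_not_usesApex hc hnt hk
  rw [Ne, eq_triangle_iff (isCycleSub_switch hc hk')]
  by_cases hjk : j = k
  · subst hjk
    rw [usesEdge_switch_self, usesApex_switch_self]
    tauto
  · rw [usesEdge_switch_of_ne hjk, usesApex_switch_of_ne hjk, ← eq_triangle_iff hc]
    exact hnt j

theorem usesEdge_gap_iff : UsesEdge H (gap H) ↔ ¬ UsesApex H (gap H) :=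
  usesEdge_iff_not_usesApex hc hnt (usesGap_gap hc)

theorem isCycleSub_partner : (partner H).IsCycleSub :=
  isCycleSub_switch hc (usesEdge_gap_iff hc hnt)

theorem partner_ne_triangle (j : ZMod t) : partner H ≠ triangle j :=
  switch_ne_triangle hc hnt (usesGap_gap hc) j

theorem partner_partner : partner (partner H) = H := by
  rw [partner, gap_partner hc, partner, switch_switch hc (usesEdge_gap_iff hc hnt)]

theorem even_ncard_partner : Even (partner H).verts.ncard ↔ ¬ Even H.verts.ncard :=
  even_ncard_switch hc (usesEdge_gap_iff hc hnt)

end nontriangle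

def nontriangleCycles (t : ℕ) [Fact (2 < t)] (p : ℕ → Prop) : Set (S t).Subgraph :=
  {H | H.IsCycleSub ∧ (∀ k, H ≠ triangle k) ∧ p H.verts.ncard}

theorem ncard_nontriangleCycles_odd_eq_even :
    (nontriangleCycles t Odd).ncard = (nontriangleCycles t Even).ncard := by
  refine Set.BijOn.ncard_eq (f := partner) (Set.InvOn.bijOn (f' := partner)
    ⟨fun H h => partner_partner h.1 h.2.1, fun H h => partner_partner h.1 h.2.1⟩ ?_ ?_)
  · rintro H ⟨hc, hnt, ho⟩
    exact ⟨isCycleSub_partner hc hnt, partner_ne_triangle hc hnt,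
      (even_ncard_partner hc hnt).mpr (Nat.not_even_iff_odd.mpr ho)⟩
  · rintro H ⟨hc, hnt, he⟩
    exact ⟨isCycleSub_partner hc hnt, partner_ne_triangle hc hnt,
      Nat.not_even_iff_odd.mp ((even_ncard_partner hc hnt).not.mpr (not_not.mpr he))⟩

theorem cOdd_eq_cEven_add : cOdd (S t) = cEven (S t) + t := by
  have hodd : {H : (S t).Subgraph | H.IsCycleSub ∧ Odd H.verts.ncard} =
      Set.range triangle ∪ nontriangleCycles t Odd := by
    ext H
    by_cases hnt : ∀ k, H ≠ triangle k
    · simp [nontriangleCycles, hnt, fun k => (hnt k).symm]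
    · obtain ⟨k, rfl⟩ := not_forall_not.mp hnt
      simp [nontriangleCycles, isCycleSub_triangle, ncard_verts_triangle, (by decide : Odd 3)]
  have heven : {H : (S t).Subgraph | H.IsCycleSub ∧ Even H.verts.ncard} =
      nontriangleCycles t Even := by
    ext H
    by_cases hnt : ∀ k, H ≠ triangle k
    · simp [nontriangleCycles, hnt]
    · obtain ⟨k, rfl⟩ := not_forall_not.mp hnt
      simp [nontriangleCycles, ncard_verts_triangle, (by decide : ¬ Even 3)]
  have hdisj : Disjoint (Set.range triangle) (nontriangleCycles t Odd) := by
    rw [Set.disjoint_left]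
    rintro _ ⟨k, rfl⟩ ⟨-, hnt, -⟩
    exact hnt k rfl
  rw [cOdd, cEven, hodd, heven, Set.ncard_union_eq hdisj (Set.toFinite _) (Set.toFinite _),
    Set.ncard_range_of_injective triangle_injective, Nat.card_zmod,
    ncard_nontriangleCycles_odd_eq_even, add_comm]

def base : (S t).Subgraph := (⊤ : (S t).Subgraph).induce (Set.range v)

theorem neighborSet_base (a : ZMod t) : base.neighborSet (v a) = {v (a + 1), v (a - 1)} := by
  ext x
  rcases vert_cases x with ⟨b, rfl⟩ | ⟨b, rfl⟩
  · simp only [base, Subgraph.mem_neighborSet, Subgraph.induce_adj, Subgraph.top_adj, adj_v_v,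
      Set.mem_range, exists_apply_eq_apply, true_and, Set.mem_insert_iff, Set.mem_singleton_iff,
      v_inj, eq_sub_iff_add_eq]
    grind
  · simp [base]

theorem usesEdge_base (k : ZMod t) : UsesEdge base k := by
  simp [UsesEdge, base, adj_v_succ]

theorem isCycleSub_base : (base : (S t).Subgraph).IsCycleSub := by
  have hreach : ∀ m : ℕ, Relation.ReflTransGen base.Adj (v 0) (v (m : ZMod t)) := by
    intro m
    induction m with
    | zero => simpa using .refl
    | succ m ih => simpa using ih.tail (usesEdge_base _)
  have h0 : v 0 ∈ (base : (S t).Subgraph).verts := by simp [base]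
  refine ⟨⟨v 0, h0⟩, coe_connected_of_reflTransGen h0 ?_, ?_⟩
  · rintro _ ⟨a, rfl⟩
    simpa using hreach a.val
  · rintro _ ⟨a, rfl⟩
    rw [neighborSet_base, Set.ncard_pair]
    intro h
    exact add_two_ne_self (a - 1) (by rw [sub_add_cancel]; exact v_inj.mp h)

theorem verts_switch_of_usesEdge (h : UsesEdge H k) :
    (switch k H).verts = insert (r k) H.verts := by
  rw [switch_of_usesEdge h, verts_detour _ _ h]

theorem exists_isCycleSub_verts_eq (s : Finset (ZMod t)) :
    ∃ H : (S t).Subgraph, H.IsCycleSub ∧ H.verts = Set.range v ∪ r '' s ∧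
      ∀ k ∉ s, UsesEdge H k := by
  classical
  induction s using Finset.induction_on with
  | empty => exact ⟨base, isCycleSub_base, by simp [base], fun k _ => usesEdge_base k⟩
  | insert a s ha ih =>
    obtain ⟨H, hc, hv, hE⟩ := ih
    have hA : ¬ UsesApex H a := by simp [UsesApex, hv, ha]
    refine ⟨switch a H, isCycleSub_switch hc (iff_of_true (hE a ha) hA), ?_, fun k hk => ?_⟩
    · rw [verts_switch_of_usesEdge (hE a ha), hv, Finset.coe_insert, Set.image_insert_eq,
        Set.union_insert]
    · rw [Finset.mem_insert, not_or] at hk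
      exact (usesEdge_switch_of_ne hk.1).mpr (hE k hk.2)

theorem choose_le_cEven {c : ℕ} (hc : Even (t + c)) : t.choose c ≤ cEven (S t) := by
  classical
  choose g hg hverts _ using exists_isCycleSub_verts_eq (t := t)
  have hr : ∀ s k, r k ∈ (g s).verts ↔ k ∈ s := fun s k => by simp [hverts]
  have hncard : ∀ s, (g s).verts.ncard = t + s.card := by
    intro s
    have hdisj : Disjoint (Set.range v) (r '' (s : Set (ZMod t))) := by
      rw [Set.disjoint_left]
      rintro _ ⟨i, rfl⟩ ⟨j, -, h⟩
      exact r_ne_v j i h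
    rw [hverts, Set.ncard_union_eq hdisj, Set.ncard_range_of_injective (fun _ _ => v_inj.mp),
      Nat.card_zmod, Set.ncard_image_of_injective _ (fun _ _ => r_inj.mp), Set.ncard_coe_finset]
  calc t.choose c
      = ((Finset.univ.powersetCard c : Finset (Finset (ZMod t))) :
          Set (Finset (ZMod t))).ncard := by
        rw [Set.ncard_coe_finset, Finset.card_powersetCard, Finset.card_univ, ZMod.card]
    _ ≤ cEven (S t) := by
      refine Set.ncard_le_ncard_of_injOn g (fun s hs => ⟨hg s, ?_⟩) ?_
      · rw [hncard, (Finset.mem_powersetCard.mp hs).2]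
        exact hc
      · intro s _ s' _ h
        ext k
        rw [← hr, h, hr]

theorem choose_two_le_cEven : t.choose 2 ≤ cEven (S t) := by
  have : 2 < t := Fact.out
  rw [← Nat.choose_symm (by omega : 2 ≤ t)]
  exact choose_le_cEven ⟨t - 1, by omega⟩

end SGraph

theorem tendsto_natCast_div_of_choose_two_le {d e : ℕ → ℕ} (hd : Tendsto d atTop atTop)
    (he : ∀ n, (d n).choose 2 ≤ e n) : Tendsto (fun n => (d n : ℝ) / e n) atTop (nhds 0) := by
  refine squeeze_zero' (.of_forall fun n => by positivity)
    ((hd.eventually_ge_atTop 2).mono fun n hn => ?_)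
    ((tendsto_const_div_atTop_nhds_zero_nat 4).comp hd)
  have hchoose : (d n : ℝ) * (d n - 1) / 2 ≤ e n := by
    rw [← Nat.cast_choose_two]
    exact_mod_cast he n
  have hm : (2 : ℝ) ≤ d n := by exact_mod_cast hn
  rw [Function.comp_apply, div_le_div_iff₀ (by nlinarith) (by positivity)]
  nlinarith

theorem tendsto_ratio_SGraph :
    Tendsto (fun n : ℕ =>
        (cOdd (SGraph (n + 3) Finset.univ) : ℝ) / (cEven (SGraph (n + 3) Finset.univ) : ℝ))
      atTop (nhds 1) ∧
    Tendsto (fun n : ℕ =>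
        (cEven (SGraph (n + 3) Finset.univ) : ℝ) / (cOdd (SGraph (n + 3) Finset.univ) : ℝ))
      atTop (nhds 1) := by
  have hodd (n : ℕ) :
      cOdd (SGraph (n + 3) Finset.univ) = cEven (SGraph (n + 3) Finset.univ) + (n + 3) :=
    have : Fact (2 < n + 3) := ⟨by omega⟩
    SGraph.cOdd_eq_cEven_add
  have hle (n : ℕ) : (n + 3).choose 2 ≤ cEven (SGraph (n + 3) Finset.univ) :=
    have : Fact (2 < n + 3) := ⟨by omega⟩
    SGraph.choose_two_le_cEven
  have hpos (n : ℕ) : (0 : ℝ) < cEven (SGraph (n + 3) Finset.univ) := by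
    exact_mod_cast (Nat.choose_pos (by omega)).trans_le (hle n)
  have h1 : Tendsto (fun n : ℕ =>
      (cOdd (SGraph (n + 3) Finset.univ) : ℝ) / cEven (SGraph (n + 3) Finset.univ))
      atTop (nhds 1) := by
    have := (tendsto_natCast_div_of_choose_two_le (tendsto_add_atTop_nat 3) hle).const_add 1
    rw [add_zero] at this
    refine this.congr fun n => ?_
    rw [hodd n, Nat.cast_add _ (n + 3), add_div, div_self (hpos n).ne']
  exact ⟨h1, by simpa using h1.inv₀ one_ne_zero⟩
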